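/- The coefficients c_{i,j} = (−1)^j · C(2τ+k−1, j) · C(2λ+k−1, i) (where i+j = k and C denotes the generalized binomial coefficient) satisfy the recurrence (i+1)(i+2τ)·c_{i+1,j} + (j+1)(j+2λ)·c_{i,j+1} = 0 for all i, j ≥ 0 with i+j+1 = k. -/
import Mathlib


/-- Generalized binomial coefficient `C(x,i) = x(x−1)⋯(x−i+1)/i!`. -/
noncomputable def gbin (x : ℝ) (i : ℕ) : ℝ :=
  (∏ j ∈ Finset.range i, (x - j)) / (Nat.factorial i)

/-- The transvectant coefficients `c_{i,j} = (−1)^j C(2τ+k−1, j) C(2λ+k−1, i)`. -/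
noncomputable def coeffC (k : ℕ) (tau lam : ℝ) (i j : ℕ) : ℝ :=
  ((-1 : ℝ) ^ j) * gbin (2 * tau + k - 1) j * gbin (2 * lam + k - 1) i

lemma gbin_succ (x : ℝ) (n : ℕ) :
    gbin x (n + 1) = gbin x n * (x - n) / (n + 1) := by
  unfold gbin
  rw [Finset.prod_range_succ, Nat.factorial_succ]
  push_cast
  have h1 : ((Nat.factorial n : ℝ)) ≠ 0 := by positivity
  have h2 : ((n : ℝ) + 1) ≠ 0 := by positivity
  field_simp
  try ring
  try exact Or.inl trivial

/-- The coefficients `c_{i,j} = (−1)^j C(2τ+k−1,j) C(2λ+k−1,i)` satisfy the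
recurrence `(i+1)(i+2τ) c_{i+1,j} + (j+1)(j+2λ) c_{i,j+1} = 0` for all `i, j ≥ 0`
with `i + j + 1 = k`. -/
theorem coeffC_recurrence (k : ℕ) (hk : 1 ≤ k) (tau lam : ℝ)
    (i j : ℕ) (hij : i + j + 1 = k) :
    ((i : ℝ) + 1) * ((i : ℝ) + 2 * tau) * coeffC k tau lam (i + 1) j
      + ((j : ℝ) + 1) * ((j : ℝ) + 2 * lam) * coeffC k tau lam i (j + 1) = 0 := by
  have hk' : (k : ℝ) = i + j + 1 := by exact_mod_cast hij.symm
  unfold coeffC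
  rw [gbin_succ, gbin_succ, hk']
  have hi : ((i : ℝ) + 1) ≠ 0 := by positivity
  have hj : ((j : ℝ) + 1) ≠ 0 := by positivity
  field_simp
  try ring
  try exact Or.inl trivial
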